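/- Let p ≥ q ≥ 1 and n = p + q. For every n×n complex matrix X written in blocks with X₁₁ the top-left p×p block and X₂₂ the bottom-right q×q block, one has (ŝ(X), ŝ(X₁₁), ŝ(X₂₂)) ∈ LR(2p, 2q), where ŝ(X) ∈ ℝ^{2n}, ŝ(X₁₁) ∈ ℝ^{2p}, ŝ(X₂₂) ∈ ℝ^{2q} are the hats of the corresponding singular value vectors. -/

import Mathlib

/-
The Hermitian dilation `[[0, Y], [Yᴴ, 0]]` of a square matrix `Y` has characteristic polynomial
`∏ᵢ (x² - sᵢ(Y)²)`, so its decreasing eigenvalue vector is `ŝ(Y)`. Permuting the rows and columns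
of the dilation of `X` so that the indices of the two `p`-blocks come before those of the two
`q`-blocks gives a Hermitian matrix whose diagonal blocks are the dilations of `X₁₁` and `X₂₂`;
its eigenvalue triple is the required point of `LR(2p, 2q)`.
-/

open Matrix

/-- Eigenvalues of a (Hermitian) complex matrix, listed in decreasing order. -/
noncomputable def eigVec {k : ℕ} (X : Matrix (Fin k) (Fin k) ℂ) (hX : X.IsHermitian) :
    Fin k → ℝ :=
  fun i => hX.eigenvalues (Tuple.sort hX.eigenvalues i.rev)

/-- The `i`-th (0-based) singular value of a rectangular complex matrix:
the square root of the `i`-th largest eigenvalue of `Y * Yᴴ` (and `0` for `i ≥ a`). -/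
noncomputable def sval {a b : ℕ} (Y : Matrix (Fin a) (Fin b) ℂ) (i : ℕ) : ℝ :=
  if h : i < a then
    Real.sqrt (eigVec (Y * Yᴴ) (Matrix.isHermitian_mul_conjTranspose_self Y) ⟨i, h⟩)
  else 0

/-- The Horn cone `Horn(k)`. -/
def Horn (k : ℕ) : Set ((Fin k → ℝ) × (Fin k → ℝ) × (Fin k → ℝ)) :=
  { v | ∃ (X Y : Matrix (Fin k) (Fin k) ℂ) (hX : X.IsHermitian) (hY : Y.IsHermitian),
      v.1 = eigVec X hX ∧ v.2.1 = eigVec Y hY ∧ v.2.2 = eigVec (X + Y) (hX.add hY) }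

/-- The Littlewood–Richardson cone `LR(m,n)`. -/
def LRcone (m n : ℕ) : Set ((Fin (m + n) → ℝ) × (Fin m → ℝ) × (Fin n → ℝ)) :=
  { v | ∃ (M : Matrix (Fin (m + n)) (Fin (m + n)) ℂ) (hM : M.IsHermitian),
      v.1 = eigVec M hM ∧
      v.2.1 = eigVec (M.submatrix (Fin.castAdd n) (Fin.castAdd n))
        (hM.submatrix (Fin.castAdd n)) ∧
      v.2.2 = eigVec (M.submatrix (Fin.natAdd m) (Fin.natAdd m))
        (hM.submatrix (Fin.natAdd m)) }

/-- Top-left `p × p` block. -/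
def blockTL (p q : ℕ) (X : Matrix (Fin (p + q)) (Fin (p + q)) ℂ) : Matrix (Fin p) (Fin p) ℂ :=
  X.submatrix (Fin.castAdd q) (Fin.castAdd q)

/-- Top-right `p × q` block. -/
def blockTR (p q : ℕ) (X : Matrix (Fin (p + q)) (Fin (p + q)) ℂ) : Matrix (Fin p) (Fin q) ℂ :=
  X.submatrix (Fin.castAdd q) (Fin.natAdd p)

/-- Bottom-left `q × p` block. -/
def blockBL (p q : ℕ) (X : Matrix (Fin (p + q)) (Fin (p + q)) ℂ) : Matrix (Fin q) (Fin p) ℂ :=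
  X.submatrix (Fin.natAdd p) (Fin.castAdd q)

/-- Bottom-right `q × q` block. -/
def blockBR (p q : ℕ) (X : Matrix (Fin (p + q)) (Fin (p + q)) ℂ) : Matrix (Fin q) (Fin q) ℂ :=
  X.submatrix (Fin.natAdd p) (Fin.natAdd p)

/-- `λ* = (−λ_k, …, −λ_1)`. -/
def starVec {k : ℕ} (x : Fin k → ℝ) : Fin k → ℝ := fun i => -x i.rev

/-- `ŝ^{p,q} = (s₁, …, s_q, 0, …, 0, −s_q, …, −s₁) ∈ ℝ^{p+q}` (with `p − q` middle zeros). -/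
noncomputable def hatPQ (p q : ℕ) (s : Fin q → ℝ) : Fin (p + q) → ℝ :=
  fun i =>
    if h : (i : ℕ) < q then s ⟨i, h⟩
    else if h' : (i : ℕ) < p then 0
    else -s ⟨p + q - 1 - i, by have := i.isLt; omega⟩

/-- The cone `A(p,q)`: pairs `(e(X), s(X₁₂))` for `X` Hermitian of size `p+q`. -/
def coneA (p q : ℕ) : Set ((Fin (p + q) → ℝ) × (Fin q → ℝ)) :=
  { v | ∃ (X : Matrix (Fin (p + q)) (Fin (p + q)) ℂ) (hX : X.IsHermitian),
      v.1 = eigVec X hX ∧ ∀ i : Fin q, v.2 i = sval (blockTR p q X) (i : ℕ) }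

/-- The cone `S(p,q)`: triples `(s(X), s(X₁₂), s(X₂₁))`. -/
def coneS (p q : ℕ) : Set ((Fin (p + q) → ℝ) × (Fin q → ℝ) × (Fin q → ℝ)) :=
  { v | ∃ X : Matrix (Fin (p + q)) (Fin (p + q)) ℂ,
      (∀ i : Fin (p + q), v.1 i = sval X (i : ℕ)) ∧
      (∀ i : Fin q, v.2.1 i = sval (blockTR p q X) (i : ℕ)) ∧
      (∀ i : Fin q, v.2.2 i = sval (blockBL p q X) (i : ℕ)) }

/-- The cone `T(p,q)`: triples `(s(X), s(X₁₁), s(X₂₂))`. -/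
def coneT (p q : ℕ) : Set ((Fin (p + q) → ℝ) × (Fin p → ℝ) × (Fin q → ℝ)) :=
  { v | ∃ X : Matrix (Fin (p + q)) (Fin (p + q)) ℂ,
      (∀ i : Fin (p + q), v.1 i = sval X (i : ℕ)) ∧
      (∀ i : Fin p, v.2.1 i = sval (blockTL p q X) (i : ℕ)) ∧
      (∀ i : Fin q, v.2.2 i = sval (blockBR p q X) (i : ℕ)) }

/-- `μ(A) = (a_r − r ≥ … ≥ a₂ − 2 ≥ a₁ − 1)` as a decreasing real vector, for
`A = {a₁ < … < a_r}` a subset of `[n]` (0-based indexing internally). -/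
noncomputable def muVec {n r : ℕ} (A : Finset (Fin n)) (h : A.card = r) : Fin r → ℝ :=
  fun k => (((A.orderIsoOfFin h k.rev : Fin n) : ℕ) : ℝ) - ((k.rev : ℕ) : ℝ)

/-- `A^o = {ℓ + 1 − a : a ∈ A}` inside `[ℓ]`. -/
def opp {n : ℕ} (A : Finset (Fin n)) : Finset (Fin n) := A.image Fin.rev

/-- `|s|_{K ∩ [q]}` where `K ⊆ [n]`, `s ∈ ℝ^q` and `[q]` is viewed inside `[n]`. -/
noncomputable def sumRestr {n q : ℕ} (s : Fin q → ℝ) (K : Finset (Fin n)) : ℝ :=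
  ∑ i ∈ K, (if h : (i : ℕ) < q then s ⟨i, h⟩ else 0)

/-- The augmented matrix `Ŷ^{p,q} = [[0, Y], [Yᴴ, 0]]` of size `p + q`. -/
def hatM (p q : ℕ) (Y : Matrix (Fin p) (Fin q) ℂ) : Matrix (Fin (p + q)) (Fin (p + q)) ℂ :=
  Matrix.reindex finSumFinEquiv finSumFinEquiv (Matrix.fromBlocks 0 Y Yᴴ 0)

open Polynomial

theorem Antitone.eq_of_univ_val_map_eq {α : Type*} [LinearOrder α] {m : ℕ} {f g : Fin m → α}
    (hf : Antitone f) (hg : Antitone g)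
    (h : Finset.univ.val.map f = Finset.univ.val.map g) : f = g := by
  rw [Fin.univ_val_map, Fin.univ_val_map, Multiset.coe_eq_coe] at h
  exact List.ofFn_injective (h.eq_of_sortedGE hf.sortedGE_ofFn hg.sortedGE_ofFn)

theorem Polynomial.roots_prod_univ_X_sub_C {ι : Type*} [Fintype ι] (w : ι → ℂ) :
    (∏ i, (X - C (w i))).roots = Finset.univ.val.map w := by
  simpa only [Multiset.map_map, Function.comp_def, ← Finset.prod_eq_multiset_prod] using
    roots_multiset_prod_X_sub_C (Finset.univ.val.map w)

section eigVec

variable {m : ℕ} {A : Matrix (Fin m) (Fin m) ℂ}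

theorem eigVec_congr {B : Matrix (Fin m) (Fin m) ℂ} (hA : A.IsHermitian) (hB : B.IsHermitian)
    (h : A = B) : eigVec A hA = eigVec B hB := by
  subst h
  rfl

theorem eigVec_antitone (hA : A.IsHermitian) : Antitone (eigVec A hA) :=
  fun _ _ hij => Tuple.monotone_sort hA.eigenvalues (Fin.rev_le_rev.mpr hij)

theorem charpoly_eq_prod_eigVec (hA : A.IsHermitian) :
    A.charpoly = ∏ i, (X - C (eigVec A hA i : ℂ)) := by
  rw [hA.charpoly_eq]
  exact ((Fin.revPerm.trans (Tuple.sort hA.eigenvalues)).prod_comp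
    (fun i => X - C (hA.eigenvalues i : ℂ))).symm

theorem eigVec_eq_of_charpoly_eq (hA : A.IsHermitian) {v : Fin m → ℝ} (hv : Antitone v)
    (h : A.charpoly = ∏ i, (X - C (v i : ℂ))) : eigVec A hA = v := by
  have hroots := congrArg Polynomial.roots ((charpoly_eq_prod_eigVec hA).symm.trans h)
  rw [Polynomial.roots_prod_univ_X_sub_C, Polynomial.roots_prod_univ_X_sub_C] at hroots
  exact (eigVec_antitone hA).eq_of_univ_val_map_eq hv <|
    Multiset.map_injective Complex.ofReal_injective <| by
      simpa only [Multiset.map_map, Function.comp_def] using hroots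

theorem eigVec_submatrix_equiv {n : ℕ} (hA : A.IsHermitian) (e : Fin n ≃ Fin m) :
    eigVec (A.submatrix e e) (hA.submatrix e) =
      eigVec A hA ∘ Fin.cast (Fin.equiv_iff_eq.mp ⟨e⟩) := by
  have hnm := Fin.equiv_iff_eq.mp ⟨e⟩
  subst hnm
  apply eigVec_eq_of_charpoly_eq _ (eigVec_antitone hA)
  change (Matrix.reindex e.symm e.symm A).charpoly = _
  rw [Matrix.charpoly_reindex, charpoly_eq_prod_eigVec hA]

end eigVec

namespace Matrix

variable {R : Type*} [CommRing R] [IsDomain R] {n : Type*} [Fintype n] [DecidableEq n]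

theorem det_fromBlocks_scalar_scalar {a : R} (ha : a ≠ 0) (B C : Matrix n n R) :
    (fromBlocks (scalar n a) B C (scalar n a)).det = (scalar n (a ^ 2) - B * C).det := by
  have hmul : fromBlocks (scalar n a) B C (scalar n a) * fromBlocks (scalar n a) 0 (-C) 1 =
      fromBlocks (scalar n (a ^ 2) - B * C) B 0 (scalar n a) := by
    have hC : C * scalar n a = scalar n a * C :=
      (scalar_commute a (fun _ => Commute.all _ _) C).symm.eq
    rw [fromBlocks_multiply, hC]
    simp [sq, sub_eq_add_neg]
  have := congrArg det hmul
  rw [det_mul, det_fromBlocks_zero₁₂, det_fromBlocks_zero₂₁, det_one, mul_one] at this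
  exact mul_right_cancel₀ (by simpa using pow_ne_zero (Fintype.card n) ha) this

theorem charpoly_fromBlocks_zero_zero (B C : Matrix n n R) :
    (fromBlocks 0 B C 0).charpoly = (B * C).charpoly.comp (X ^ 2) := by
  rw [charpoly, charmatrix_fromBlocks, charmatrix_zero, det_fromBlocks_scalar_scalar X_ne_zero,
    charpoly, ← coe_compRingHom_apply, RingHom.map_det]
  congr 1
  ext i j : 1
  rcases eq_or_ne i j with rfl | hij
  · simp [charmatrix, ← Matrix.map_mul]
  · simp [charmatrix, ← Matrix.map_mul, hij]

end Matrix

theorem hatPQ_antitone {p q : ℕ} {s : Fin q → ℝ} (hs : Antitone s) (hs₀ : ∀ i, 0 ≤ s i) :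
    Antitone (hatPQ p q s) := by
  intro i j hij
  simp only [hatPQ]
  have hij : (i : ℕ) ≤ j := hij
  split_ifs
  all_goals first
    | omega
    | exact le_rfl
    | exact hs (Fin.mk_le_mk.mpr hij)
    | exact neg_le_neg (hs (Fin.mk_le_mk.mpr (by omega)))
    | exact hs₀ _
    | exact neg_nonpos.mpr (hs₀ _)
    | exact (neg_nonpos.mpr (hs₀ _)).trans (hs₀ _)

theorem prod_X_sub_C_hatPQ_self {k : ℕ} (s : Fin k → ℝ) :
    ∏ j, (X - C (hatPQ k k s j : ℂ)) = ∏ i, (X ^ 2 - C ((s i : ℂ) ^ 2)) := by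
  have hpos : ∀ i, hatPQ k k s (Fin.castAdd k i) = s i := fun i => dif_pos i.isLt
  have hneg : ∀ i, hatPQ k k s (Fin.natAdd k i.rev) = -s i := fun i => by
    simp only [hatPQ, Fin.natAdd, dif_neg (show ¬ k + (i.rev : ℕ) < k by omega)]
    congr 2
    ext
    simp only [Fin.val_rev]
    omega
  have hrev : ∏ i, (X - C (hatPQ k k s (Fin.natAdd k i) : ℂ)) = ∏ i, (X + C (s i : ℂ)) := by
    rw [← Equiv.prod_comp Fin.revPerm]
    simp only [Fin.revPerm_apply, hneg, Complex.ofReal_neg, map_neg, sub_neg_eq_add]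
  rw [Fin.prod_univ_add, hrev, ← Finset.prod_mul_distrib]
  simp only [hpos, map_pow]
  exact Finset.prod_congr rfl fun i _ => by ring

theorem isHermitian_hatM {p q : ℕ} (Y : Matrix (Fin p) (Fin q) ℂ) : (hatM p q Y).IsHermitian :=
  (Matrix.isHermitian_zero.fromBlocks rfl Matrix.isHermitian_zero).submatrix _

section sval

variable {a b : ℕ} (Y : Matrix (Fin a) (Fin b) ℂ)

theorem eigVec_mul_conjTranspose_nonneg (i : Fin a) :
    0 ≤ eigVec (Y * Yᴴ) (Matrix.isHermitian_mul_conjTranspose_self Y) i :=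
  Matrix.eigenvalues_self_mul_conjTranspose_nonneg Y _

theorem sval_eq_sqrt_eigVec (i : Fin a) :
    sval Y i = √(eigVec (Y * Yᴴ) (Matrix.isHermitian_mul_conjTranspose_self Y) i) :=
  dif_pos i.isLt

theorem sval_nonneg (i : ℕ) : 0 ≤ sval Y i := by
  unfold sval
  split_ifs <;> simp

theorem sval_antitone : Antitone fun i : Fin a => sval Y i := fun i j hij => by
  simp only [sval_eq_sqrt_eigVec]
  exact Real.sqrt_le_sqrt (eigVec_antitone _ hij)

end sval

theorem eigVec_hatM {k : ℕ} (Y : Matrix (Fin k) (Fin k) ℂ) :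
    eigVec (hatM k k Y) (isHermitian_hatM Y) = hatPQ k k fun i => sval Y i := by
  refine eigVec_eq_of_charpoly_eq _ (hatPQ_antitone (sval_antitone Y) fun i => sval_nonneg Y i) ?_
  rw [prod_X_sub_C_hatPQ_self, hatM, Matrix.charpoly_reindex,
    Matrix.charpoly_fromBlocks_zero_zero,
    charpoly_eq_prod_eigVec (Matrix.isHermitian_mul_conjTranspose_self Y), prod_comp]
  refine Finset.prod_congr rfl fun i _ => ?_
  rw [sval_eq_sqrt_eigVec, ← Complex.ofReal_pow, Real.sq_sqrt (eigVec_mul_conjTranspose_nonneg Y i)]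
  simp

theorem hatM_submatrix {m n m' n' : ℕ} (Y : Matrix (Fin m) (Fin n) ℂ) (f : Fin m' → Fin m)
    (g : Fin n' → Fin n) :
    hatM m' n' (Y.submatrix f g) =
      (hatM m n Y).submatrix (Fin.addCases (Fin.castAdd n ∘ f) (Fin.natAdd m ∘ g))
        (Fin.addCases (Fin.castAdd n ∘ f) (Fin.natAdd m ∘ g)) := by
  ext i j
  induction i using Fin.addCases <;> induction j using Fin.addCases <;> simp [hatM]

def blockInterleave (p q : ℕ) : Fin (p + p + (q + q)) ≃ Fin (p + q + (p + q)) :=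
  finSumFinEquiv.symm.trans <| (Equiv.sumCongr finSumFinEquiv.symm finSumFinEquiv.symm).trans <|
    (Equiv.sumSumSumComm _ _ _ _).trans <|
      (Equiv.sumCongr finSumFinEquiv finSumFinEquiv).trans finSumFinEquiv

theorem blockInterleave_comp_castAdd (p q : ℕ) :
    blockInterleave p q ∘ Fin.castAdd (q + q) =
      Fin.addCases (Fin.castAdd (p + q) ∘ Fin.castAdd q) (Fin.natAdd (p + q) ∘ Fin.castAdd q) := by
  ext i : 1
  induction i using Fin.addCases <;>
    simp only [blockInterleave, Function.comp_apply, Equiv.trans_apply, Fin.addCases_left,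
      Fin.addCases_right, finSumFinEquiv_symm_apply_castAdd, finSumFinEquiv_symm_apply_natAdd,
      Equiv.sumCongr_apply, Sum.map_inl, Equiv.sumSumSumComm_apply] <;> rfl

theorem blockInterleave_comp_natAdd (p q : ℕ) :
    blockInterleave p q ∘ Fin.natAdd (p + p) =
      Fin.addCases (Fin.castAdd (p + q) ∘ Fin.natAdd p) (Fin.natAdd (p + q) ∘ Fin.natAdd p) := by
  ext i : 1
  induction i using Fin.addCases <;>
    simp only [blockInterleave, Function.comp_apply, Equiv.trans_apply, Fin.addCases_left,
      Fin.addCases_right, finSumFinEquiv_symm_apply_castAdd, finSumFinEquiv_symm_apply_natAdd,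
      Equiv.sumCongr_apply, Sum.map_inr, Equiv.sumSumSumComm_apply] <;> rfl

section blockInterleave

variable {p q : ℕ} (X : Matrix (Fin (p + q)) (Fin (p + q)) ℂ)

theorem hatM_submatrix_blockInterleave_castAdd :
    ((hatM _ _ X).submatrix (blockInterleave p q) (blockInterleave p q)).submatrix
      (Fin.castAdd (q + q)) (Fin.castAdd (q + q)) = hatM p p (blockTL p q X) := by
  rw [Matrix.submatrix_submatrix, blockInterleave_comp_castAdd, blockTL, hatM_submatrix]

theorem hatM_submatrix_blockInterleave_natAdd :
    ((hatM _ _ X).submatrix (blockInterleave p q) (blockInterleave p q)).submatrix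
      (Fin.natAdd (p + p)) (Fin.natAdd (p + p)) = hatM q q (blockBR p q X) := by
  rw [Matrix.submatrix_submatrix, blockInterleave_comp_natAdd, blockBR, hatM_submatrix]

end blockInterleave

theorem stmt_11 (p q : ℕ)
    (X : Matrix (Fin (p + q)) (Fin (p + q)) ℂ) :
    (hatPQ (p + q) (p + q) (fun i => sval X (i : ℕ)) ∘
        Fin.cast (show p + p + (q + q) = p + q + (p + q) by ring),
      hatPQ p p (fun i => sval (blockTL p q X) (i : ℕ)),
      hatPQ q q (fun i => sval (blockBR p q X) (i : ℕ))) ∈ LRcone (p + p) (q + q) := by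
  have hX := isHermitian_hatM X
  refine ⟨_, hX.submatrix (blockInterleave p q), ?_, ?_, ?_⟩
  · rw [eigVec_submatrix_equiv hX, eigVec_hatM]
  · rw [eigVec_congr _ (isHermitian_hatM _) (hatM_submatrix_blockInterleave_castAdd X),
      eigVec_hatM]
  · rw [eigVec_congr _ (isHermitian_hatM _) (hatM_submatrix_blockInterleave_natAdd X),
      eigVec_hatM]
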